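/- Let B_α(z) = (z-α)/(1-ᾱz) be a Blaschke factor with α in the open unit disk, and let φ be any measurable function on the unit circle with φ(z)² = B_α(z) a.e. Then φ is not of bounded type, i.e., φ cannot be written as a quotient f/g with f, g ∈ H^∞ and g ≠ 0. -/

import Mathlib

open MeasureTheory Complex Filter Matrix

noncomputable section

namespace HankelPaper

instance : Fact (0 < 2 * Real.pi) := ⟨by positivity⟩

/-- The circle, modeled as `ℝ / 2πℤ`. -/
abbrev 𝕋 := AddCircle (2 * Real.pi)

/-- Normalized Haar (Lebesgue) measure on the circle. -/
abbrev μT : Measure 𝕋 := AddCircle.haarAddCircle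

/-- The coordinate function `z` on the unit circle. -/
def zf : 𝕋 → ℂ := fun x => fourier 1 x

/-- All Fourier coefficients of negative index vanish (analyticity). -/
def NegVanish (f : 𝕋 → ℂ) : Prop := ∀ n : ℤ, n < 0 → fourierCoeff f n = 0

/-- The Hardy space `H¹`. -/
def MemH1 (f : 𝕋 → ℂ) : Prop := Integrable f μT ∧ NegVanish f

/-- The Hardy space `H²`. -/
def MemH2 (f : 𝕋 → ℂ) : Prop := MemLp f 2 μT ∧ NegVanish f

/-- The Hardy space `H^∞`. -/
def MemHinf (f : 𝕋 → ℂ) : Prop := MemLp f ⊤ μT ∧ NegVanish f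

/-- `f` is of bounded type (Nevanlinna class): a quotient of two `H^∞` functions. -/
def BddType (f : 𝕋 → ℂ) : Prop :=
  ∃ g h : 𝕋 → ℂ, MemHinf g ∧ MemHinf h ∧ ¬ h =ᵐ[μT] 0 ∧
    f =ᵐ[μT] fun x => g x / h x

/-- `N^∞` : essentially bounded functions of bounded type. -/
def MemNinf (f : 𝕋 → ℂ) : Prop := BddType f ∧ MemLp f ⊤ μT

/-- A scalar inner function. -/
def IsInner (θ : 𝕋 → ℂ) : Prop := MemHinf θ ∧ ∀ᵐ x ∂μT, ‖θ x‖ = 1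

/- Vector-valued versions (coordinatewise). -/
def MemH1V {n : ℕ} (f : 𝕋 → Fin n → ℂ) : Prop := ∀ j, MemH1 fun x => f x j
def MemH2V {n : ℕ} (f : 𝕋 → Fin n → ℂ) : Prop := ∀ j, MemH2 fun x => f x j
def MemL2V {n : ℕ} (f : 𝕋 → Fin n → ℂ) : Prop := ∀ j, MemLp (fun x => f x j) 2 μT
def BddTypeV {n : ℕ} (f : 𝕋 → Fin n → ℂ) : Prop := ∀ j, BddType fun x => f x j

/-- Entrywise `L²` matrix-valued functions. -/
def MemL2M {n m : ℕ} (Φ : 𝕋 → Matrix (Fin n) (Fin m) ℂ) : Prop :=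
  ∀ i j, MemLp (fun x => Φ x i j) 2 μT

/-- The `j`-th column of a matrix-valued function. -/
def colF {n m : ℕ} (Φ : 𝕋 → Matrix (Fin n) (Fin m) ℂ) (j : Fin m) : 𝕋 → Fin n → ℂ :=
  fun x i => Φ x i j

/-- The subfamily `{φ i : i ∈ s}` is independent modulo the Nevanlinna class. -/
def IndepModN {n : ℕ} {ι : Type*} (φ : ι → 𝕋 → Fin n → ℂ) (s : Finset ι) : Prop :=
  ∀ a : ι → 𝕋 → ℂ, (∀ i, BddType (a i)) →
    BddTypeV (fun x j => ∑ i ∈ s, a i x * φ i x j) →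
    ∀ i ∈ s, a i =ᵐ[μT] 0

/-- The independency (degree of independence) modulo the Nevanlinna class of a finite
family: the maximal cardinality of an independent subfamily. -/
def indN {n : ℕ} {ι : Type*} (φ : ι → 𝕋 → Fin n → ℂ) : ℕ :=
  sSup {k | ∃ s : Finset ι, IndepModN φ s ∧ s.card = k}

/-- The kernel of the block Hankel operator `H_Φ` : those `f ∈ H²_{ℂᵐ}` with `Φ f ∈ H¹_{ℂⁿ}`. -/
def hankelKer {n m : ℕ} (Φ : 𝕋 → Matrix (Fin n) (Fin m) ℂ) : Set (𝕋 → Fin m → ℂ) :=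
  {f | MemH2V f ∧ ∀ i : Fin n, MemH1 fun x => ∑ j, Φ x i j * f x j}

/-- A matrix-valued inner function: entries in `H^∞` and a.e. isometric values. -/
def IsMatrixInner {n m : ℕ} (Θ : 𝕋 → Matrix (Fin n) (Fin m) ℂ) : Prop :=
  (∀ i j, MemHinf fun x => Θ x i j) ∧ ∀ᵐ x ∂μT, (Θ x)ᴴ * Θ x = 1

/-- The shift-invariant subspace `Θ H²_{ℂᵐ}` (as a set of functions, up to null sets). -/
def thetaH2 {n m : ℕ} (Θ : 𝕋 → Matrix (Fin n) (Fin m) ℂ) : Set (𝕋 → Fin n → ℂ) :=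
  {f | ∃ h : 𝕋 → Fin m → ℂ, MemH2V h ∧ f =ᵐ[μT] fun x => (Θ x).mulVec (h x)}

/-- `Rank F` : the essential supremum of the pointwise rank. -/
def essRank {n m : ℕ} (F : 𝕋 → Matrix (Fin n) (Fin m) ℂ) : ℕ :=
  sInf {k | ∀ᵐ x ∂μT, (F x).rank ≤ k}

/-- The backward shift `S*` on scalar functions: `(S* f)(z) = z̄ (f(z) - f̂(0))`. -/
def backShift (f : 𝕋 → ℂ) : 𝕋 → ℂ :=
  fun x => fourier (-1) x * (f x - fourierCoeff f 0)

/-- The backward shift on vector-valued functions, coordinatewise. -/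
def backShiftV {n : ℕ} (f : 𝕋 → Fin n → ℂ) : 𝕋 → Fin n → ℂ :=
  fun x j => backShift (fun y => f y j) x

/-!
If `φ = g / h` with `g, h ∈ H^∞` and `h ≠ 0`, then `(1 - ᾱ z) g² = (z - α) h²` on the circle.
Products and multiplication by `z` act on Fourier coefficients exactly as on power series, so the
extensions `G, H` of `g, h` to the disc satisfy `(1 - ᾱ w) G(w)² = (w - α) H(w)²`. At `w = α` the
left side vanishes to even order and the right side to odd order, forcing `H ≡ 0`, i.e. `h = 0`.
-/

open scoped ComplexConjugate Topology

section Fourier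

variable {T : ℝ} [Fact (0 < T)]

open AddCircle

lemma fourierCoeff_fourier_mul (f : AddCircle T → ℂ) (m n : ℤ) :
    fourierCoeff (fun x => fourier m x * f x) n = fourierCoeff f (n - m) := by
  refine integral_congr_ae (Eventually.of_forall fun x => ?_)
  dsimp only
  rw [smul_eq_mul, smul_eq_mul, ← mul_assoc, ← fourier_add, neg_sub, neg_add_eq_sub]

lemma fourierCoeff_conj (f : AddCircle T → ℂ) (n : ℤ) :
    fourierCoeff (fun x => conj (f x)) n = conj (fourierCoeff f (-n)) := by
  simp only [fourierCoeff, ← integral_conj, smul_eq_mul, map_mul, fourier_neg, neg_neg]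

lemma norm_fourierCoeff_le_integral_norm (f : AddCircle T → ℂ) (n : ℤ) :
    ‖fourierCoeff f n‖ ≤ ∫ x, ‖f x‖ ∂haarAddCircle := by
  refine (norm_integral_le_integral_norm _).trans_eq (integral_congr_ae ?_)
  exact Eventually.of_forall fun x => by simp [Circle.norm_coe]

lemma integral_mul_eq_tsum_fourierCoeff {f g : AddCircle T → ℂ}
    (hf : MemLp f 2 haarAddCircle) (hg : MemLp g 2 haarAddCircle) :
    ∫ x, f x * g x ∂haarAddCircle = ∑' n : ℤ, fourierCoeff f (-n) * fourierCoeff g n := by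
  have hf' : MemLp (fun x => conj (f x)) 2 haarAddCircle := hf.star
  have key := fourierBasis.tsum_inner_mul_inner (hf'.toLp _) (hg.toLp g)
  rw [L2.inner_def] at key
  rw [← key.trans (integral_congr_ae ?_)]
  · refine tsum_congr fun n => ?_
    rw [← inner_conj_symm, ← HilbertBasis.repr_apply_apply, ← HilbertBasis.repr_apply_apply,
      fourierBasis_repr, fourierBasis_repr, fourierCoeff_congr_ae hf'.coeFn_toLp,
      fourierCoeff_congr_ae hg.coeFn_toLp, fourierCoeff_conj, conj_conj]
  · filter_upwards [hf'.coeFn_toLp, hg.coeFn_toLp] with x hfx hgx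
    simp [hfx, hgx, mul_comm]

lemma fourierCoeff_mul_eq_tsum {f g : AddCircle T → ℂ}
    (hf : MemLp f 2 haarAddCircle) (hg : MemLp g 2 haarAddCircle) (n : ℤ) :
    fourierCoeff (fun x => f x * g x) n
      = ∑' k : ℤ, fourierCoeff f (n - k) * fourierCoeff g k := by
  have hf' : MemLp (fun x => fourier (-n) x * f x) 2 haarAddCircle :=
    hf.congr_norm ((map_continuous _).aestronglyMeasurable.mul hf.1)
      (ae_of_all _ fun x => by simp [Circle.norm_coe])
  calc fourierCoeff (fun x => f x * g x) n
      = ∫ x, (fourier (-n) x * f x) * g x ∂haarAddCircle :=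
        integral_congr_ae (ae_of_all _ fun x => (mul_assoc _ _ _).symm)
    _ = _ := integral_mul_eq_tsum_fourierCoeff hf' hg
    _ = _ := tsum_congr fun k => by
        rw [fourierCoeff_fourier_mul, sub_neg_eq_add, neg_add_eq_sub]

lemma ae_eq_zero_of_fourierCoeff_eq_zero {f : AddCircle T → ℂ} (hf : MemLp f 2 haarAddCircle)
    (hc : ∀ n, fourierCoeff f n = 0) : f =ᵐ[haarAddCircle] 0 := by
  have h0 : hf.toLp f = 0 := fourierBasis.repr.injective <| by
    ext n
    simp [fourierBasis_repr, fourierCoeff_congr_ae hf.coeFn_toLp, hc]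
  exact hf.coeFn_toLp.symm.trans (h0 ▸ Lp.coeFn_zero _ _ _)

end Fourier

section Parity

variable {𝕜 : Type*} [NontriviallyNormedField 𝕜] {c G H : 𝕜 → 𝕜} {α : 𝕜}

/-- The order of vanishing at `α` is even on the left and odd on the right unless `H` vanishes
identically near `α`. -/
lemma eventuallyEq_zero_of_mul_sq_eq_sub_mul_sq (hc : AnalyticAt 𝕜 c α) (hcα : c α ≠ 0)
    (hG : AnalyticAt 𝕜 G α) (hH : AnalyticAt 𝕜 H α) (h : c * G ^ 2 =ᶠ[𝓝 α] (· - α) * H ^ 2) :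
    H =ᶠ[𝓝 α] 0 := by
  by_contra hne
  obtain ⟨k, hk⟩ := ENat.ne_top_iff_exists.mp (mt analyticOrderAt_eq_top.mp hne)
  have hord := analyticOrderAt_congr h
  rw [analyticOrderAt_mul hc (hG.pow 2), analyticOrderAt_mul (by fun_prop) (hH.pow 2),
    analyticOrderAt_pow hG, analyticOrderAt_pow hH, hc.analyticOrderAt_eq_zero.mpr hcα,
    analyticOrderAt_id_sub_const_self, zero_add, ← hk, nsmul_eq_mul, nsmul_eq_mul] at hord
  cases hG' : analyticOrderAt G α using ENat.recTopCoe with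
  | top =>
    rw [hG'] at hord
    exact ENat.natCast_ne_top (1 + 2 * k) (by exact_mod_cast hord.symm)
  | coe m =>
    rw [hG'] at hord
    norm_cast at hord
    omega

lemma eqOn_zero_of_mul_sq_eq_sub_mul_sq {U : Set 𝕜} (hU : IsPreconnected U) (hUo : IsOpen U)
    (hαU : α ∈ U) (hc : AnalyticAt 𝕜 c α) (hcα : c α ≠ 0) (hG : AnalyticOnNhd 𝕜 G U)
    (hH : AnalyticOnNhd 𝕜 H U) (h : ∀ w ∈ U, c w * G w ^ 2 = (w - α) * H w ^ 2) :
    Set.EqOn H 0 U :=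
  hH.eqOn_zero_of_preconnected_of_eventuallyEq_zero hU hαU <|
    eventuallyEq_zero_of_mul_sq_eq_sub_mul_sq hc hcα (hG α hαU) (hH α hαU)
      (Filter.mem_of_superset (hUo.mem_nhds hαU) h)

end Parity

section Blaschke

lemma sub_ne_zero_of_norm_lt_norm {z α : ℂ} (h : ‖α‖ < ‖z‖) : z - α ≠ 0 :=
  sub_ne_zero.mpr (ne_of_apply_ne norm h.ne')

lemma one_sub_conj_mul_ne_zero {z α : ℂ} (hz : ‖z‖ ≤ 1) (hα : ‖α‖ < 1) :
    1 - conj α * z ≠ 0 := by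
  rw [sub_ne_zero]
  intro h
  have := congrArg norm h
  rw [norm_one, norm_mul, Complex.norm_conj] at this
  exact (mul_lt_one_of_nonneg_of_lt_one_left (norm_nonneg α) hα hz).ne this.symm

lemma mul_sq_eq_of_div_sq_eq_blaschke {z α a b : ℂ} (hz : ‖z‖ = 1) (hα : ‖α‖ < 1)
    (h : (a / b) ^ 2 = (z - α) / (1 - conj α * z)) :
    (1 - conj α * z) * a ^ 2 = (z - α) * b ^ 2 := by
  have hnum := sub_ne_zero_of_norm_lt_norm (hz ▸ hα)
  have hden := one_sub_conj_mul_ne_zero hz.le hα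
  have hb : b ≠ 0 := by
    rintro rfl
    rw [div_zero, zero_pow two_ne_zero] at h
    exact div_ne_zero hnum hden h.symm
  rw [div_pow, div_eq_div_iff (pow_ne_zero 2 hb) hden] at h
  linear_combination h

end Blaschke

section Hardy

open Finset

lemma norm_zf (x : 𝕋) : ‖zf x‖ = 1 := Circle.norm_coe _

lemma NegVanish.mul {f g : 𝕋 → ℂ} (hf2 : MemLp f 2 μT) (hg2 : MemLp g 2 μT) (hf : NegVanish f)
    (hg : NegVanish g) : NegVanish fun x => f x * g x := by
  intro n hn
  rw [fourierCoeff_mul_eq_tsum hf2 hg2]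
  refine (tsum_congr fun k => ?_).trans tsum_zero
  rcases lt_or_ge k 0 with hk | hk
  · rw [hg k hk, mul_zero]
  · rw [hf (n - k) (by omega), zero_mul]

lemma fourierCoeff_mul_eq_sum_range {f g : 𝕋 → ℂ} (hf2 : MemLp f 2 μT) (hg2 : MemLp g 2 μT)
    (hf : NegVanish f) (hg : NegVanish g) (n : ℕ) :
    fourierCoeff (fun x => f x * g x) n
      = ∑ k ∈ range (n + 1), fourierCoeff f k * fourierCoeff g (n - k : ℕ) := by
  simp_rw [mul_comm (f _)]
  rw [fourierCoeff_mul_eq_tsum hg2 hf2, tsum_eq_sum (s := (range (n + 1)).map Nat.castEmbedding),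
    sum_map]
  · refine sum_congr rfl fun k hk => ?_
    rw [mul_comm, Nat.castEmbedding_apply, Nat.cast_sub (Nat.lt_succ_iff.mp (mem_range.mp hk))]
  · intro k hk
    rcases lt_or_ge k 0 with hk0 | hk0
    · rw [hf k hk0, mul_zero]
    · have hkn : (n : ℤ) < k := by
        by_contra! hkn
        exact hk (mem_map.mpr ⟨k.toNat, mem_range.mpr (by omega), by simp [hk0]⟩)
      rw [hg _ (sub_neg.mpr hkn), zero_mul]

def diskExt (f : 𝕋 → ℂ) : ℂ → ℂ :=
  FormalMultilinearSeries.ofScalarsSum fun n : ℕ => fourierCoeff f n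

lemma diskExt_apply (f : 𝕋 → ℂ) (w : ℂ) : diskExt f w = ∑' n : ℕ, fourierCoeff f n * w ^ n :=
  FormalMultilinearSeries.ofScalars_sum_eq _ w

lemma diskExt_congr_ae {f g : 𝕋 → ℂ} (h : f =ᵐ[μT] g) : diskExt f = diskExt g := by
  rw [diskExt, diskExt, fourierCoeff_congr_ae h]

lemma summable_norm_fourierCoeff_mul_pow (f : 𝕋 → ℂ) {w : ℂ} (hw : ‖w‖ < 1) :
    Summable fun n : ℕ => ‖fourierCoeff f n * w ^ n‖ := by
  refine .of_nonneg_of_le (fun n => norm_nonneg _) (fun n => ?_)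
    ((summable_geometric_of_lt_one (norm_nonneg w) hw).mul_left (∫ x, ‖f x‖ ∂μT))
  rw [norm_mul, norm_pow]
  gcongr
  exact norm_fourierCoeff_le_integral_norm f n

lemma one_le_radius_ofScalars_fourierCoeff (f : 𝕋 → ℂ) :
    1 ≤ (FormalMultilinearSeries.ofScalars ℂ fun n : ℕ => fourierCoeff f n).radius := by
  simpa using FormalMultilinearSeries.le_radius_of_bound _ (∫ x, ‖f x‖ ∂μT) (r := 1) fun n => by
    simpa [FormalMultilinearSeries.ofScalars_norm] using norm_fourierCoeff_le_integral_norm f n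

lemma hasFPowerSeriesOnBall_diskExt (f : 𝕋 → ℂ) :
    HasFPowerSeriesOnBall (diskExt f)
      (FormalMultilinearSeries.ofScalars ℂ fun n : ℕ => fourierCoeff f n) 0 1 :=
  (FormalMultilinearSeries.hasFPowerSeriesOnBall _
    (zero_lt_one.trans_le (one_le_radius_ofScalars_fourierCoeff f))).mono one_pos (one_le_radius_ofScalars_fourierCoeff f)

lemma analyticOnNhd_diskExt (f : 𝕋 → ℂ) : AnalyticOnNhd ℂ (diskExt f) (Metric.ball 0 1) :=
  fun _ hw => (hasFPowerSeriesOnBall_diskExt f).analyticAt_of_mem <| by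
    simpa [← ofReal_norm] using hw

lemma diskExt_mul {f g : 𝕋 → ℂ} (hf2 : MemLp f 2 μT) (hg2 : MemLp g 2 μT) (hf : NegVanish f)
    (hg : NegVanish g) {w : ℂ} (hw : ‖w‖ < 1) :
    diskExt (fun x => f x * g x) w = diskExt f w * diskExt g w := by
  rw [diskExt_apply, diskExt_apply, diskExt_apply,
    tsum_mul_tsum_eq_tsum_sum_range_of_summable_norm
      (summable_norm_fourierCoeff_mul_pow f hw) (summable_norm_fourierCoeff_mul_pow g hw)]
  refine tsum_congr fun n => ?_
  rw [fourierCoeff_mul_eq_sum_range hf2 hg2 hf hg, sum_mul]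
  refine sum_congr rfl fun k hk => ?_
  rw [← pow_mul_pow_sub w (Nat.lt_succ_iff.mp (mem_range.mp hk))]
  ring

lemma fourierCoeff_affine_mul {f : 𝕋 → ℂ} (hf : Integrable f μT) (c₀ c₁ : ℂ) (n : ℤ) :
    fourierCoeff (fun x => (c₀ + c₁ * zf x) * f x) n
      = c₀ * fourierCoeff f n + c₁ * fourierCoeff f (n - 1) := by
  have hsplit : (fun x => (c₀ + c₁ * zf x) * f x)
      = (fun x => c₀ * f x) + fun x => c₁ * (fourier 1 x * f x) := by
    ext x
    simp only [zf, Pi.add_apply]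
    ring
  have hf₁ : Integrable (fun x => c₁ * (fourier 1 x * f x)) μT := (hf.fourier_smul 1).const_mul c₁
  rw [hsplit, fourierCoeff.add (hf.const_mul c₀) hf₁,
    Pi.add_apply, fourierCoeff.const_mul, fourierCoeff.const_mul, fourierCoeff_fourier_mul]

lemma diskExt_affine_mul {f : 𝕋 → ℂ} (hf : Integrable f μT) (hf1 : fourierCoeff f (-1) = 0)
    (c₀ c₁ : ℂ) {w : ℂ} (hw : ‖w‖ < 1) :
    diskExt (fun x => (c₀ + c₁ * zf x) * f x) w = (c₀ + c₁ * w) * diskExt f w := by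
  set a : ℕ → ℂ := fun n => fourierCoeff f n * w ^ n
  set b : ℕ → ℂ := fun n => fourierCoeff f ((n : ℤ) - 1) * w ^ n
  have ha : Summable a := (summable_norm_fourierCoeff_mul_pow f hw).of_norm
  have hb_succ : (fun n => b (n + 1)) = fun n => w * a n := by
    ext n
    simp only [a, b, Nat.cast_succ, add_sub_cancel_right, pow_succ]
    ring
  have hb : Summable b := (summable_nat_add_iff 1).mp (hb_succ ▸ ha.mul_left w)
  have hb_tsum : ∑' n, b n = w * ∑' n, a n := by
    rw [hb.tsum_eq_zero_add, hb_succ, tsum_mul_left]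
    simp [b, hf1]
  calc diskExt (fun x => (c₀ + c₁ * zf x) * f x) w = ∑' n, (c₀ * a n + c₁ * b n) := by
        rw [diskExt_apply]
        refine tsum_congr fun n => ?_
        rw [fourierCoeff_affine_mul hf]
        ring
    _ = c₀ * ∑' n, a n + c₁ * ∑' n, b n := by
        rw [(ha.mul_left c₀).tsum_add (hb.mul_left c₁), tsum_mul_left, tsum_mul_left]
    _ = (c₀ + c₁ * w) * diskExt f w := by
        rw [hb_tsum, diskExt_apply]
        ring

lemma ae_eq_zero_of_diskExt_eventuallyEq_zero {f : 𝕋 → ℂ} (hf2 : MemLp f 2 μT)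
    (hf : NegVanish f) (h : diskExt f =ᶠ[𝓝 0] 0) : f =ᵐ[μT] 0 := by
  have hc := (FormalMultilinearSeries.ofScalars_series_eq_zero ℂ).mp
    ((hasFPowerSeriesOnBall_diskExt f).hasFPowerSeriesAt.eq_zero_of_eventually h)
  refine ae_eq_zero_of_fourierCoeff_eq_zero hf2 fun n => ?_
  rcases lt_or_ge n 0 with hn | hn
  · exact hf n hn
  · lift n to ℕ using hn
    exact congrFun hc n

lemma MemHinf.diskExt_affine_mul_sq {g : 𝕋 → ℂ} (hg : MemHinf g) (c₀ c₁ : ℂ) {w : ℂ}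
    (hw : ‖w‖ < 1) :
    diskExt (fun x => (c₀ + c₁ * zf x) * g x ^ 2) w = (c₀ + c₁ * w) * diskExt g w ^ 2 := by
  have hg2 : MemLp g 2 μT := hg.1.mono_exponent le_top
  have hgg : MemLp (fun x => g x * g x) 2 μT := hg2.mul' hg.1
  simp only [sq]
  rw [diskExt_affine_mul (hgg.integrable one_le_two)
      (NegVanish.mul hg2 hg2 hg.2 hg.2 _ (by norm_num)) c₀ c₁ hw,
    diskExt_mul hg2 hg2 hg.2 hg.2 hw]

end Hardy

theorem stmt1_general (α : ℂ) (hα : ‖α‖ < 1) (φ : 𝕋 → ℂ)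
    (hsq : ∀ᵐ x ∂μT, φ x ^ 2 = (zf x - α) / (1 - (starRingEnd ℂ) α * zf x)) :
    ¬ BddType φ := by
  rintro ⟨g, h, hg, hh, hh0, hφ⟩
  have hcircle : (fun x => (1 + -conj α * zf x) * g x ^ 2) =ᵐ[μT]
      fun x => (-α + 1 * zf x) * h x ^ 2 := by
    filter_upwards [hφ, hsq] with x hφx hsqx
    rw [hφx] at hsqx
    linear_combination mul_sq_eq_of_div_sq_eq_blaschke (norm_zf x) hα hsqx
  have hdisk : ∀ w ∈ Metric.ball (0 : ℂ) 1,
      (1 - conj α * w) * diskExt g w ^ 2 = (w - α) * diskExt h w ^ 2 := by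
    intro w hw
    have hext := congrFun (diskExt_congr_ae hcircle) w
    rw [hg.diskExt_affine_mul_sq _ _ (mem_ball_zero_iff.mp hw),
      hh.diskExt_affine_mul_sq _ _ (mem_ball_zero_iff.mp hw)] at hext
    linear_combination hext
  have hH : Set.EqOn (diskExt h) 0 (Metric.ball 0 1) :=
    eqOn_zero_of_mul_sq_eq_sub_mul_sq (convex_ball 0 1).isPreconnected Metric.isOpen_ball
      (mem_ball_zero_iff.mpr hα) (by fun_prop) (one_sub_conj_mul_ne_zero hα.le hα)
      (analyticOnNhd_diskExt g) (analyticOnNhd_diskExt h) hdisk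
  exact hh0 (ae_eq_zero_of_diskExt_eventuallyEq_zero (hh.1.mono_exponent le_top) hh.2
    (hH.eventuallyEq_of_mem (Metric.ball_mem_nhds 0 one_pos)))

/-- a square root of a Blaschke factor is not of bounded type. -/
theorem stmt1 (α : ℂ) (hα : ‖α‖ < 1) (φ : 𝕋 → ℂ) (hmeas : Measurable φ)
    (hsq : ∀ᵐ x ∂μT, φ x ^ 2 = (zf x - α) / (1 - (starRingEnd ℂ) α * zf x)) :
    ¬ BddType φ :=
  stmt1_general α hα φ hsq
end HankelPaper
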